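/- arXiv:math/0501357 — 6 statements merged into one kernel-verified Lean document; each statement's English description precedes it below -/
import Mathlib

section
/- Let F : X → ℝⁿ be a vector of n objective functions to be maximized on a feasible set S ⊆ X, and let W ∈ ℝⁿ satisfy W i ≤ F(x) i for all x ∈ S and all i. If x* ∈ S maximizes the function θ(x) = √(∑ i, (F(x) i − W i)²) over S, then x* is Pareto-optimal for F on S. -/
theorem stmt1 {X : Type*} {n : ℕ} (F : X → Fin n → ℝ) (S : Set X) (W : Fin n → ℝ)
    (hW : ∀ x ∈ S, ∀ i, W i ≤ F x i)
    (xs : X) (hxs : xs ∈ S)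
    (hmax : ∀ x ∈ S,
      Real.sqrt (∑ i, (F x i - W i) ^ 2) ≤ Real.sqrt (∑ i, (F xs i - W i) ^ 2)) :
    ¬ ∃ x ∈ S, (∀ i, F xs i ≤ F x i) ∧ (∃ j, F xs j < F x j) := by
  rintro ⟨x, hx, hall, j, hj⟩
  have hlt : (∑ i, (F xs i - W i) ^ 2) < ∑ i, (F x i - W i) ^ 2 := by
    apply Finset.sum_lt_sum
    · intro i _
      have h1 : (0:ℝ) ≤ F xs i - W i := sub_nonneg.mpr (hW xs hxs i)
      have h2 : F xs i - W i ≤ F x i - W i := by linarith [hall i]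
      exact pow_le_pow_left₀ h1 h2 2
    · refine ⟨j, Finset.mem_univ j, ?_⟩
      have h1 : (0:ℝ) ≤ F xs j - W j := sub_nonneg.mpr (hW xs hxs j)
      have h2 : F xs j - W j < F x j - W j := by linarith
      exact pow_lt_pow_left₀ h2 h1 (by norm_num)
  have := hmax x hx
  have hs : Real.sqrt (∑ i, (F xs i - W i) ^ 2) < Real.sqrt (∑ i, (F x i - W i) ^ 2) :=
    Real.sqrt_lt_sqrt (Finset.sum_nonneg fun i _ => sq_nonneg _) hlt
  linarith
end

section
/- Let F : X → ℝⁿ be objectives to be maximized on S, K an upper bound point (K i ≥ F(x) i for all x ∈ S, i) and W a lower bound point (W i ≤ F(x) i for all x ∈ S, i), with W i < K i for all i. Suppose x* ∈ S minimizes γ(x) = √(∑ i (K i − F(x) i)²) / √(∑ i (F(x) i − W i)²) over S, where the denominator is positive at x*. Then x* is Pareto-optimal for the two-criterion problem of minimizing Δ(x) = √(∑ i (K i − F(x) i)²) and maximizing θ(x) = √(∑ i (F(x) i − W i)²) on S; i.e., there is no x ∈ S with Δ(x) ≤ Δ(x*), θ(x) ≥ θ(x*), and at least one of the inequalities strict.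 -/
theorem stmt2 {X : Type*} {n : ℕ} (F : X → Fin n → ℝ) (S : Set X) (K W : Fin n → ℝ)
    (hK : ∀ x ∈ S, ∀ i, F x i ≤ K i)
    (hW : ∀ x ∈ S, ∀ i, W i ≤ F x i)
    (hWK : ∀ i, W i < K i)
    (Δ θ : X → ℝ)
    (hΔ : ∀ x, Δ x = Real.sqrt (∑ i, (K i - F x i) ^ 2))
    (hθ : ∀ x, θ x = Real.sqrt (∑ i, (F x i - W i) ^ 2))
    (hpos : ∀ x ∈ S, 0 < θ x)
    (xs : X) (hxs : xs ∈ S)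
    (hmin : ∀ x ∈ S, Δ xs / θ xs ≤ Δ x / θ x) :
    ¬ ∃ x ∈ S, Δ x ≤ Δ xs ∧ θ xs ≤ θ x ∧ (Δ x < Δ xs ∨ θ xs < θ x) := by
  rintro ⟨x, hx, hΔle, hθle, hstrict⟩
  have hΔnonneg : ∀ y, 0 ≤ Δ y := fun y => (hΔ y) ▸ Real.sqrt_nonneg _
  have hθx : 0 < θ x := hpos x hx
  have hθxs : 0 < θ xs := hpos xs hxs
  have hm := hmin x hx
  rcases hstrict with h | h
  · -- Δ x < Δ xs
    have h1 : Δ x / θ x ≤ Δ x / θ xs :=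
      div_le_div_of_nonneg_left (hΔnonneg x) hθxs hθle |>.trans_eq rfl
    have h2 : Δ x / θ xs < Δ xs / θ xs := by gcongr
    exact absurd hm (not_le.mpr (h1.trans_lt h2))
  · -- θ xs < θ x
    by_cases hΔ0 : Δ xs = 0
    · -- then F xs = K, so θ xs is maximal
      have hsum : ∑ i, (K i - F xs i) ^ 2 = 0 := by
        have := (hΔ xs) ▸ hΔ0
        have hnn : 0 ≤ ∑ i, (K i - F xs i) ^ 2 :=
          Finset.sum_nonneg fun i _ => sq_nonneg _
        nlinarith [Real.sq_sqrt hnn]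
      have hFK : ∀ i, F xs i = K i := by
        intro i
        have := (Finset.sum_eq_zero_iff_of_nonneg
          (fun i _ => sq_nonneg (K i - F xs i))).mp hsum i (Finset.mem_univ i)
        nlinarith [this]
      have : θ x ≤ θ xs := by
        rw [hθ x, hθ xs]
        apply Real.sqrt_le_sqrt
        apply Finset.sum_le_sum
        intro i _
        have h1 : W i ≤ F x i := hW x hx i
        have h2 : F x i ≤ K i := hK x hx i
        have h3 : F xs i = K i := hFK i
        nlinarith
      linarith
    · have hΔpos : 0 < Δ xs := lt_of_le_of_ne (hΔnonneg xs) (Ne.symm hΔ0)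
      have h1 : Δ x / θ x ≤ Δ xs / θ x :=
        by gcongr
      have h2 : Δ xs / θ x < Δ xs / θ xs := div_lt_div_of_pos_left hΔpos hθxs h
      exact absurd hm (not_le.mpr (h1.trans_lt h2))
end

section
/- Let F : X → ℝⁿ be objectives to be maximized on S with ideal point K (K i ≥ F(x) i for all x ∈ S, i). Suppose x₁ ∈ S minimizes Δ(x) = √(∑ i (K i − F(x) i)²) over S, and x₂ ∈ S maximizes θ(x) = √(∑ i (F(x) i − W i)²) over the restricted set {x ∈ S : Δ(x) = Δ(x₁)}, where W i ≤ F(x) i for all x ∈ S, i. Then x₂ is Pareto-optimal for F on S. -/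
theorem stmt3 {X : Type*} {n : ℕ} (F : X → Fin n → ℝ) (S : Set X) (K W : Fin n → ℝ)
    (hK : ∀ x ∈ S, ∀ i, F x i ≤ K i)
    (hW : ∀ x ∈ S, ∀ i, W i ≤ F x i)
    (Δ θ : X → ℝ)
    (hΔ : ∀ x, Δ x = Real.sqrt (∑ i, (K i - F x i) ^ 2))
    (hθ : ∀ x, θ x = Real.sqrt (∑ i, (F x i - W i) ^ 2))
    (x₁ : X) (hx₁ : x₁ ∈ S) (hmin : ∀ x ∈ S, Δ x₁ ≤ Δ x)
    (x₂ : X) (hx₂ : x₂ ∈ S) (hx₂Δ : Δ x₂ = Δ x₁)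
    (hmax : ∀ x ∈ S, Δ x = Δ x₁ → θ x ≤ θ x₂) :
    ¬ ∃ x ∈ S, (∀ i, F x₂ i ≤ F x i) ∧ (∃ j, F x₂ j < F x j) := by
  rintro ⟨x, hxS, hle, j, hj⟩
  -- Δ x ≤ Δ x₂
  have hΔle : Δ x ≤ Δ x₂ := by
    rw [hΔ, hΔ]
    apply Real.sqrt_le_sqrt
    apply Finset.sum_le_sum
    intro i _
    have h1 : (0:ℝ) ≤ K i - F x i := by linarith [hK x hxS i]
    have h2 : K i - F x i ≤ K i - F x₂ i := by linarith [hle i]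
    nlinarith
  have hΔeq : Δ x = Δ x₁ := le_antisymm (hx₂Δ ▸ hΔle) (hmin x hxS)
  have hθlt : θ x₂ < θ x := by
    rw [hθ, hθ]
    apply Real.sqrt_lt_sqrt
    · apply Finset.sum_nonneg; intro i _; positivity
    apply Finset.sum_lt_sum
    · intro i _
      have h1 : (0:ℝ) ≤ F x₂ i - W i := by linarith [hW x₂ hx₂ i]
      have h2 : F x₂ i - W i ≤ F x i - W i := by linarith [hle i]
      nlinarith
    · refine ⟨j, Finset.mem_univ j, ?_⟩
      have h1 : (0:ℝ) ≤ F x₂ j - W j := by linarith [hW x₂ hx₂ j]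
      have h2 : F x₂ j - W j < F x j - W j := by linarith
      nlinarith
  exact absurd (hmax x hxS hΔeq) (not_le.mpr hθlt)
end

section
/- Let F : X → ℝⁿ be objectives to be maximized on S with anti-ideal point W (W i ≤ F(x) i for all x ∈ S, i). Suppose x₃ ∈ S maximizes θ(x) = √(∑ i (F(x) i − W i)²) over S, and x₄ ∈ S minimizes Δ(x) = √(∑ i (K i − F(x) i)²) over the restricted set {x ∈ S : θ(x) = θ(x₃)}, where K i ≥ F(x) i for all x ∈ S, i. Then x₄ is Pareto-optimal for F on S. -/
theorem stmt4 {X : Type*} {n : ℕ} (F : X → Fin n → ℝ) (S : Set X) (K W : Fin n → ℝ)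
    (hK : ∀ x ∈ S, ∀ i, F x i ≤ K i)
    (hW : ∀ x ∈ S, ∀ i, W i ≤ F x i)
    (Δ θ : X → ℝ)
    (hΔ : ∀ x, Δ x = Real.sqrt (∑ i, (K i - F x i) ^ 2))
    (hθ : ∀ x, θ x = Real.sqrt (∑ i, (F x i - W i) ^ 2))
    (x₃ : X) (hx₃ : x₃ ∈ S) (hmax : ∀ x ∈ S, θ x ≤ θ x₃)
    (x₄ : X) (hx₄ : x₄ ∈ S) (hx₄θ : θ x₄ = θ x₃)
    (hmin : ∀ x ∈ S, θ x = θ x₃ → Δ x₄ ≤ Δ x) :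
    ¬ ∃ x ∈ S, (∀ i, F x₄ i ≤ F x i) ∧ (∃ j, F x₄ j < F x j) := by
  rintro ⟨x, hxS, hle, j, hj⟩
  have hsum : ∑ i, (F x₄ i - W i) ^ 2 < ∑ i, (F x i - W i) ^ 2 := by
    apply Finset.sum_lt_sum
    · intro i _
      have h1 : 0 ≤ F x₄ i - W i := by linarith [hW x₄ hx₄ i]
      have h2 : F x₄ i - W i ≤ F x i - W i := by linarith [hle i]
      nlinarith
    · exact ⟨j, Finset.mem_univ j, by nlinarith [hW x₄ hx₄ j, hle j]⟩
  have hθlt : θ x₄ < θ x := by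
    rw [hθ, hθ]
    exact Real.sqrt_lt_sqrt (Finset.sum_nonneg fun i _ => sq_nonneg _) hsum
  have := hmax x hxS
  linarith [hx₄θ ▸ hθlt]
end

section
/- Consider the feasible set S = {(y₁, y₂, y₃) ∈ ℝ³ : 0 ≤ y i ≤ 1 for all i, y₁ + y₃ ≤ 1, y₂ + y₃ ≤ 1} with objectives F i(y) = y i to be maximized. The point (1, 1, 0) minimizes γ(y) = √(∑ i (1 − y i)²)/√(∑ i y i²) over S \ {0}, and (1, 1, 0) is Pareto-optimal for (F₁, F₂, F₃) on S. -/
/-!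
Write `u = 1 - y₀`, `v = 1 - y₁`, `c = y₂`. On the feasible set `u, v ≥ c ≥ 0`, and
`2‖1 - y‖² - ‖y‖² = (u² + 2u) + (v² + 2v) + c² - 4c ≥ 3c² ≥ 0`, so `γ(y) ≥ 1/√2 = γ(1, 1, 0)`.
Pareto optimality holds because `(1, 1, 0)` is the only feasible point above itself: the bounds
`y ≤ 1` pin the first two coordinates, and then `y₀ + y₂ ≤ 1` pins the third.
-/

open Finset

def circulationPolytope : Set (Fin 3 → ℝ) :=
  {y | (∀ i, 0 ≤ y i ∧ y i ≤ 1) ∧ y 0 + y 2 ≤ 1 ∧ y 1 + y 2 ≤ 1}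

theorem sqrt_div_sqrt_le_sqrt_div_sqrt {a b A B : ℝ} (hb : 0 < b) (hB : 0 < B)
    (h : a * B ≤ A * b) : √a / √b ≤ √A / √B := by
  rw [← Real.sqrt_div' _ hb.le, ← Real.sqrt_div' _ hB.le]
  exact Real.sqrt_le_sqrt ((div_le_div_iff₀ hb hB).mpr h)

namespace circulationPolytope

theorem one_one_zero_mem : (![1, 1, 0] : Fin 3 → ℝ) ∈ circulationPolytope :=
  ⟨fun i => by fin_cases i <;> norm_num, by norm_num [Matrix.cons_val_two],
    by norm_num [Matrix.cons_val_two]⟩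

theorem sum_sq_le_two_mul_sum_one_sub_sq {y : Fin 3 → ℝ} (hy : y ∈ circulationPolytope) :
    ∑ i, y i ^ 2 ≤ 2 * ∑ i, (1 - y i) ^ 2 := by
  obtain ⟨hb, h02, h12⟩ := hy
  obtain ⟨h0, -⟩ := hb 0
  obtain ⟨h1, -⟩ := hb 1
  obtain ⟨h2, -⟩ := hb 2
  simp only [Fin.sum_univ_three]
  nlinarith [sq_nonneg (y 2),
    mul_nonneg (by linarith : (0 : ℝ) ≤ 1 - y 0 - y 2) (by linarith : (0 : ℝ) ≤ 3 - y 0 + y 2),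
    mul_nonneg (by linarith : (0 : ℝ) ≤ 1 - y 1 - y 2) (by linarith : (0 : ℝ) ≤ 3 - y 1 + y 2)]

theorem eq_one_one_zero_of_le {y : Fin 3 → ℝ} (hy : y ∈ circulationPolytope)
    (hle : (![1, 1, 0] : Fin 3 → ℝ) ≤ y) : y = ![1, 1, 0] := by
  obtain ⟨hb, h02, -⟩ := hy
  have h0 : y 0 = 1 := le_antisymm (hb 0).2 (by simpa using hle 0)
  have h1 : y 1 = 1 := le_antisymm (hb 1).2 (by simpa using hle 1)
  have h2 : y 2 = 0 := le_antisymm (by linarith) (hb 2).1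
  ext i
  fin_cases i <;> simp [h0, h1, h2]

end circulationPolytope

theorem stmt8 (S : Set (Fin 3 → ℝ))
    (hS : S = {y | (∀ i, 0 ≤ y i ∧ y i ≤ 1) ∧ y 0 + y 2 ≤ 1 ∧ y 1 + y 2 ≤ 1}) :
    ((![1, 1, 0] : Fin 3 → ℝ) ∈ S) ∧
    (∀ y ∈ S, y ≠ 0 →
      Real.sqrt (∑ i, (1 - (![1, 1, 0] : Fin 3 → ℝ) i) ^ 2) /
        Real.sqrt (∑ i, ((![1, 1, 0] : Fin 3 → ℝ) i) ^ 2) ≤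
      Real.sqrt (∑ i, (1 - y i) ^ 2) / Real.sqrt (∑ i, (y i) ^ 2)) ∧
    (¬ ∃ y ∈ S, (∀ i, (![1, 1, 0] : Fin 3 → ℝ) i ≤ y i) ∧
      (∃ j, (![1, 1, 0] : Fin 3 → ℝ) j < y j)) := by
  change S = circulationPolytope at hS
  subst hS
  refine ⟨circulationPolytope.one_one_zero_mem, fun y hy hy0 => ?_, ?_⟩
  · have hpos : 0 < ∑ i, y i ^ 2 := by
      obtain ⟨i, hi⟩ := Function.ne_iff.mp hy0
      exact sum_pos' (fun j _ => sq_nonneg (y j)) ⟨i, mem_univ i, sq_pos_of_ne_zero hi⟩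
    apply sqrt_div_sqrt_le_sqrt_div_sqrt (by simp [Fin.sum_univ_three]) hpos
    simpa [Fin.sum_univ_three, one_add_one_eq_two, mul_comm] using
      circulationPolytope.sum_sq_le_two_mul_sum_one_sub_sq hy
  · rintro ⟨y, hy, hle, j, hlt⟩
    rw [circulationPolytope.eq_one_one_zero_of_le hy hle] at hlt
    exact lt_irrefl _ hlt
end

section
/- Let F : X → ℝⁿ be objectives to be maximized on a finite nonempty feasible set S, with ideal point K i = max over S of F(·) i. Then a minimizer x* of Δ(x) = ∑ i (K i − F(x) i)² over S exists, and every such minimizer is Pareto-optimal for F on S. -/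
theorem stmt12 {X : Type*} {n : ℕ} (F : X → Fin n → ℝ) (S : Set X)
    (hfin : S.Finite) (hne : S.Nonempty) (K : Fin n → ℝ)
    (hK : ∀ i, IsGreatest ((fun x => F x i) '' S) (K i)) :
    (∃ xs ∈ S, ∀ x ∈ S, (∑ i, (K i - F xs i) ^ 2) ≤ ∑ i, (K i - F x i) ^ 2) ∧
    (∀ xs ∈ S, (∀ x ∈ S, (∑ i, (K i - F xs i) ^ 2) ≤ ∑ i, (K i - F x i) ^ 2) →
      ¬ ∃ x ∈ S, (∀ i, F xs i ≤ F x i) ∧ (∃ j, F xs j < F x j)) := by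
  have hKe : ∀ i, ∀ x ∈ S, F x i ≤ K i := fun i x hx => (hK i).2 ⟨x, hx, rfl⟩
  constructor
  · obtain ⟨xs, hxs, h⟩ := hfin.toFinset.exists_min_image
      (fun x => ∑ i, (K i - F x i) ^ 2) (by simpa [Set.Finite.mem_toFinset] using hne)
    exact ⟨xs, hfin.mem_toFinset.1 hxs, fun x hx => h x (hfin.mem_toFinset.2 hx)⟩
  · rintro xs hxs hmin ⟨x, hx, hle, j, hj⟩
    have hlt : (∑ i, (K i - F x i) ^ 2) < ∑ i, (K i - F xs i) ^ 2 := by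
      apply Finset.sum_lt_sum
      · intro i _
        have h1 : (0:ℝ) ≤ K i - F x i := sub_nonneg.2 (hKe i x hx)
        have h2 : K i - F x i ≤ K i - F xs i := by linarith [hle i]
        exact pow_le_pow_left₀ h1 h2 2
      · refine ⟨j, Finset.mem_univ j, ?_⟩
        have h1 : (0:ℝ) ≤ K j - F x j := sub_nonneg.2 (hKe j x hx)
        have h2 : K j - F x j < K j - F xs j := by linarith
        exact pow_lt_pow_left₀ h2 h1 (by norm_num)
    exact absurd (hmin x hx) (not_le.2 hlt)
end
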